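/- arXiv:1602.08836 — 5 statements merged into one kernel-verified Lean document; each statement's English description precedes it below -/
import Mathlib

section
/- For independent nonnegative random variables X and Y with Y having finite expectation, E[ln(1 + X/(Y+1))] = ∫₀^∞ (M_Y(z)(1 − M_X(z)) e^{−z}/z) dz, where M_X(z) = E[e^{−zX}] and M_Y(z) = E[e^{−zY}] denote the Laplace transforms (MGFs with negative argument) of X and Y. -/
/-!
For `x, y ≥ 0`, Frullani's integral for `exp (-t)` gives
`log (1 + x / (y + 1)) = ∫₀^∞ (e^{-(y+1) z} - e^{-(x+y+1) z}) / z dz`, with a nonnegative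
integrand. Substituting `x = X ω`, `y = Y ω` and exchanging the two integrals by Tonelli, the
inner expectation at fixed `z` is `e^{-z} (M_Y(z) - M_{X+Y}(z)) / z`, and independence factors
`M_{X+Y} = M_X M_Y`.
-/

open MeasureTheory ProbabilityTheory Real Set

section Tonelli

variable {α β : Type*} [MeasurableSpace α] [MeasurableSpace β] {μ : Measure α} {ν : Measure β}
  {K : α → β → ℝ}

theorem integral_integral_eq_toReal_lintegral_lintegral [SFinite ν]
    (hK : AEStronglyMeasurable (Function.uncurry K) (μ.prod ν)) (hK0 : ∀ a b, 0 ≤ K a b)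
    (hint : ∀ᵐ a ∂μ, Integrable (K a) ν) :
    ∫ a, ∫ b, K a b ∂ν ∂μ = (∫⁻ a, ∫⁻ b, ENNReal.ofReal (K a b) ∂ν ∂μ).toReal := by
  rw [integral_eq_lintegral_of_nonneg_ae (ae_of_all _ fun a ↦ integral_nonneg (hK0 a))
    hK.integral_prod_right']
  congr 1
  refine lintegral_congr_ae ?_
  filter_upwards [hint] with a ha
  exact ofReal_integral_eq_lintegral_ofReal ha (ae_of_all _ (hK0 a))

theorem integral_integral_swap_of_nonneg [SFinite μ] [SFinite ν]
    (hK : AEStronglyMeasurable (Function.uncurry K) (μ.prod ν)) (hK0 : ∀ a b, 0 ≤ K a b)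
    (hμ : ∀ᵐ a ∂μ, Integrable (K a) ν) (hν : ∀ᵐ b ∂ν, Integrable (fun a ↦ K a b) μ) :
    ∫ a, ∫ b, K a b ∂ν ∂μ = ∫ b, ∫ a, K a b ∂μ ∂ν := by
  rw [integral_integral_eq_toReal_lintegral_lintegral hK hK0 hμ,
    integral_integral_eq_toReal_lintegral_lintegral (K := fun b a ↦ K a b) hK.prod_swap
      (fun b a ↦ hK0 a b) hν,
    lintegral_lintegral_swap (hK.aemeasurable.ennreal_ofReal)]

end Tonelli

theorem integrableOn_Ioi_inv_mul_exp_neg_sub {a b : ℝ} (ha : 0 < a) (hab : a ≤ b) :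
    IntegrableOn (fun z ↦ z⁻¹ * (exp (-(a * z)) - exp (-(b * z)))) (Ioi 0) := by
  refine Integrable.mono' ((exp_neg_integrableOn_Ioi 0 ha).const_mul (b - a))
    (by fun_prop) ((ae_restrict_iff' measurableSet_Ioi).2 (ae_of_all _ fun z (hz : 0 < z) ↦ ?_))
  -- `1 - exp (-u) ≤ u` gives the majorant `(b - a) * exp (-a * z)`.
  have hdiff : exp (-(a * z)) - exp (-(b * z)) ≤ exp (-a * z) * ((b - a) * z) := by
    have hexp := add_one_le_exp (-((b - a) * z))
    have hsplit : exp (-(b * z)) = exp (-a * z) * exp (-((b - a) * z)) := by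
      rw [← exp_add]; ring_nf
    rw [hsplit, neg_mul]
    nlinarith [hexp, exp_pos (-(a * z))]
  have hnonneg : 0 ≤ exp (-(a * z)) - exp (-(b * z)) := by
    rw [sub_nonneg, exp_le_exp]; nlinarith
  rw [Real.norm_eq_abs, abs_of_nonneg (mul_nonneg (inv_nonneg.2 hz.le) hnonneg),
    inv_mul_le_iff₀ hz]
  nlinarith

theorem integral_Ioi_inv_mul_exp_neg_sub {a b : ℝ} (ha : 0 < a) (hab : a ≤ b) :
    ∫ z in Ioi 0, z⁻¹ * (exp (-(a * z)) - exp (-(b * z))) = log (b / a) := by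
  have h := Frullani.integral_Ioi_eq (f := fun t ↦ exp (-t)) (L := 1) (R := 0)
    ((by fun_prop : Continuous fun t : ℝ ↦ exp (-t)).locallyIntegrable.locallyIntegrableOn _)
    ha (ha.trans_le hab)
    (((continuous_exp.comp continuous_neg).tendsto' 0 1 (by simp)).mono_left nhdsWithin_le_nhds)
    tendsto_exp_neg_atTop_nhds_zero (integrableOn_Ioi_inv_mul_exp_neg_sub ha hab)
  simpa using h

noncomputable def hamdiIntegrand (x y z : ℝ) : ℝ :=
  z⁻¹ * (exp (-((y + 1) * z)) - exp (-((x + y + 1) * z)))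

theorem hamdiIntegrand_nonneg {x : ℝ} (hx : 0 ≤ x) (y z : ℝ) : 0 ≤ hamdiIntegrand x y z := by
  rcases le_total 0 z with hz | hz
  · refine mul_nonneg (inv_nonneg.2 hz) (sub_nonneg.2 (exp_le_exp.2 ?_))
    nlinarith
  · refine mul_nonneg_of_nonpos_of_nonpos (inv_nonpos.2 hz) (sub_nonpos.2 (exp_le_exp.2 ?_))
    nlinarith

theorem hamdiIntegrand_eq (x y z : ℝ) :
    hamdiIntegrand x y z = exp (-z) / z * (exp (-z * y) - exp (-z * (x + y))) := by
  simp only [hamdiIntegrand, div_eq_inv_mul, mul_assoc, mul_sub, ← exp_add]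
  ring_nf

theorem integrableOn_Ioi_hamdiIntegrand {x y : ℝ} (hx : 0 ≤ x) (hy : 0 ≤ y) :
    IntegrableOn (hamdiIntegrand x y) (Ioi 0) :=
  integrableOn_Ioi_inv_mul_exp_neg_sub (by linarith) (by linarith)

theorem integral_Ioi_hamdiIntegrand {x y : ℝ} (hx : 0 ≤ x) (hy : 0 ≤ y) :
    ∫ z in Ioi 0, hamdiIntegrand x y z = log (1 + x / (y + 1)) := by
  unfold hamdiIntegrand
  rw [integral_Ioi_inv_mul_exp_neg_sub (by linarith) (by linarith)]
  congr 1
  field_simp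
  ring

section Expectation

variable {Ω : Type*} [MeasurableSpace Ω] {μ : Measure Ω} {X Y : Ω → ℝ}

theorem integrable_exp_neg_mul_of_nonneg [IsFiniteMeasure μ] (hX : AEMeasurable X μ)
    (hX0 : ∀ᵐ ω ∂μ, 0 ≤ X ω) {z : ℝ} (hz : 0 ≤ z) :
    Integrable (fun ω ↦ exp (-z * X ω)) μ := by
  refine .of_mem_Icc 0 1 (measurable_exp.comp_aemeasurable (hX.const_mul _)) ?_
  filter_upwards [hX0] with ω hω
  exact ⟨(exp_pos _).le, exp_le_one_iff.2 (by nlinarith)⟩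

theorem integrable_hamdiIntegrand_comp [IsFiniteMeasure μ] (hX : AEMeasurable X μ)
    (hY : AEMeasurable Y μ) (hX0 : ∀ᵐ ω ∂μ, 0 ≤ X ω) (hY0 : ∀ᵐ ω ∂μ, 0 ≤ Y ω) {z : ℝ} (hz : 0 ≤ z) :
    Integrable (fun ω ↦ hamdiIntegrand (X ω) (Y ω) z) μ := by
  have hXY0 : ∀ᵐ ω ∂μ, 0 ≤ (X + Y) ω := by
    filter_upwards [hX0, hY0] with ω hx hy using add_nonneg hx hy
  simp_rw [hamdiIntegrand_eq]
  exact ((integrable_exp_neg_mul_of_nonneg hY hY0 hz).sub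
    (integrable_exp_neg_mul_of_nonneg (hX.add hY) hXY0 hz)).const_mul _

theorem integral_hamdiIntegrand_comp [IsFiniteMeasure μ] (hX : AEMeasurable X μ)
    (hY : AEMeasurable Y μ) (hX0 : ∀ᵐ ω ∂μ, 0 ≤ X ω) (hY0 : ∀ᵐ ω ∂μ, 0 ≤ Y ω)
    (hXY : IndepFun X Y μ) {z : ℝ} (hz : 0 ≤ z) :
    ∫ ω, hamdiIntegrand (X ω) (Y ω) z ∂μ = mgf Y μ (-z) * (1 - mgf X μ (-z)) * exp (-z) / z := by
  have hXY0 : ∀ᵐ ω ∂μ, 0 ≤ (X + Y) ω := by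
    filter_upwards [hX0, hY0] with ω hx hy using add_nonneg hx hy
  have hIXY : Integrable (fun ω ↦ exp (-z * (X ω + Y ω))) μ :=
    integrable_exp_neg_mul_of_nonneg (hX.add hY) hXY0 hz
  simp_rw [hamdiIntegrand_eq]
  rw [integral_const_mul, integral_sub (integrable_exp_neg_mul_of_nonneg hY hY0 hz) hIXY]
  change exp (-z) / z * (mgf Y μ (-z) - mgf (X + Y) μ (-z)) = _
  rw [hXY.mgf_add (aemeasurable_exp_mul _ hX) (aemeasurable_exp_mul _ hY)]
  ring

end Expectation

theorem hamdi_lemma_general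
    {Ω : Type*} [MeasurableSpace Ω] (μ : Measure Ω) [IsProbabilityMeasure μ]
    (X Y : Ω → ℝ) (hX : Measurable X) (hY : Measurable Y)
    (hXpos : ∀ ω, 0 ≤ X ω) (hYpos : ∀ ω, 0 ≤ Y ω)
    (hindep : IndepFun X Y μ) :
    ∫ ω, Real.log (1 + X ω / (Y ω + 1)) ∂μ =
      ∫ z in Ioi (0 : ℝ),
        (∫ ω, Real.exp (-z * Y ω) ∂μ) * (1 - ∫ ω, Real.exp (-z * X ω) ∂μ) *
          Real.exp (-z) / z := by
  have hK : Measurable (Function.uncurry fun ω z ↦ hamdiIntegrand (X ω) (Y ω) z) := by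
    unfold hamdiIntegrand
    fun_prop
  calc ∫ ω, log (1 + X ω / (Y ω + 1)) ∂μ
      = ∫ ω, (∫ z in Ioi 0, hamdiIntegrand (X ω) (Y ω) z) ∂μ := by
        simp_rw [integral_Ioi_hamdiIntegrand (hXpos _) (hYpos _)]
    _ = ∫ z in Ioi 0, ∫ ω, hamdiIntegrand (X ω) (Y ω) z ∂μ :=
        integral_integral_swap_of_nonneg hK.aestronglyMeasurable
          (fun ω z ↦ hamdiIntegrand_nonneg (hXpos ω) _ z)
          (ae_of_all _ fun ω ↦ integrableOn_Ioi_hamdiIntegrand (hXpos ω) (hYpos ω))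
          ((ae_restrict_iff' measurableSet_Ioi).2 (ae_of_all _ fun z (hz : 0 < z) ↦
            integrable_hamdiIntegrand_comp hX.aemeasurable hY.aemeasurable
              (ae_of_all _ hXpos) (ae_of_all _ hYpos) hz.le))
    _ = ∫ z in Ioi 0, mgf Y μ (-z) * (1 - mgf X μ (-z)) * exp (-z) / z :=
        setIntegral_congr_fun measurableSet_Ioi fun z (hz : 0 < z) ↦
          integral_hamdiIntegrand_comp hX.aemeasurable hY.aemeasurable
            (ae_of_all _ hXpos) (ae_of_all _ hYpos) hindep hz.le

/-- **Hamdi's integral lemma.** For independent nonnegative random variables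
`X` and `Y` with `Y` integrable,
`E[ln(1 + X/(Y+1))] = ∫₀^∞ M_Y(z) (1 − M_X(z)) e^{−z}/z dz`,
where `M_X(z) = E[e^{−zX}]` and `M_Y(z) = E[e^{−zY}]`. -/
theorem hamdi_lemma
    {Ω : Type*} [MeasurableSpace Ω] (μ : Measure Ω) [IsProbabilityMeasure μ]
    (X Y : Ω → ℝ) (hX : Measurable X) (hY : Measurable Y)
    (hXpos : ∀ ω, 0 ≤ X ω) (hYpos : ∀ ω, 0 ≤ Y ω)
    (hindep : IndepFun X Y μ) (hYint : Integrable Y μ) :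
    ∫ ω, Real.log (1 + X ω / (Y ω + 1)) ∂μ =
      ∫ z in Ioi (0 : ℝ),
        (∫ ω, Real.exp (-z * Y ω) ∂μ) * (1 - ∫ ω, Real.exp (-z * X ω) ∂μ) *
          Real.exp (-z) / z :=
  hamdi_lemma_general μ X Y hX hY hXpos hYpos hindep
end

section
/- For the standard singular path loss model (ε = 0), the Laplace transform of the Poisson shot noise S = Σ_{x∈Φ} X_x ‖x‖^{−α} with i.i.d. Gamma(M,1) marks X_x equals E[e^{−sS}] = exp(Γ_δ · s^δ) for s > 0, where δ = 2/α ∈ (0,1) and Γ_δ = (δ π λ' / Γ(M)) · Γ(M + δ) · Γ(−δ) < 0. -/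
/-!
By the Laplace functional of the marked process, `E[e^{-sS}] = e^{-I}` with
`I = λ' ∫∫ (1 - e^{-s g ‖x‖^{-α}}) dx dG(g)`, `G = Gamma(M,1)`. In polar coordinates and after the
substitution `u = s g r^{-α}`, the spatial integral equals
`2π (sg)^δ / α · ∫₀^∞ u^{-1-δ} (1 - e^{-u}) du`, and writing `1 - e^{-u} = ∫₀^u e^{-z} dz` and
exchanging the integrals gives `∫₀^∞ u^{-1-δ} (1 - e^{-u}) du = Γ(1-δ)/δ`, so the spatial integral
is `π Γ(1-δ) (sg)^δ`. The mark contributes `E[g^δ] = Γ(M+δ)/Γ(M)`, and `Γ(1-δ) = -δ Γ(-δ)`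
turns `-I` into `Γ_δ s^δ`.
-/

open MeasureTheory ProbabilityTheory Real Set
open scoped ENNReal

/-- `negExp a = e^{-a}` for extended nonnegative reals (with `e^{-∞} = 0`). -/
noncomputable def negExp (a : ℝ≥0∞) : ℝ≥0∞ :=
  if a = ∞ then 0 else ENNReal.ofReal (Real.exp (-a.toReal))

theorem measurable_negExp : Measurable negExp :=
  Measurable.ite (measurableSet_singleton ∞) measurable_const
    (ENNReal.measurable_toReal.neg.exp.ennreal_ofReal)

theorem negExp_ofReal {a : ℝ} (ha : 0 ≤ a) :
    negExp (ENNReal.ofReal a) = ENNReal.ofReal (exp (-a)) := by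
  simp [negExp, ENNReal.toReal_ofReal ha]

theorem one_sub_negExp_ofReal {a : ℝ} (ha : 0 ≤ a) :
    1 - negExp (ENNReal.ofReal a) = ENNReal.ofReal (1 - exp (-a)) := by
  rw [negExp_ofReal ha, ENNReal.ofReal_sub _ (exp_pos _).le, ENNReal.ofReal_one]

theorem Real.Gamma_neg_of_neg_one_lt_of_neg {s : ℝ} (h1 : -1 < s) (h0 : s < 0) : Gamma s < 0 :=
  neg_of_mul_pos_right (Gamma_add_one h0.ne ▸ Gamma_pos_of_pos (by linarith)) h0.le

theorem lintegral_Ioi_exp_neg_mul_rpow_sub_one {s : ℝ} (hs : 0 < s) :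
    ∫⁻ x in Ioi (0 : ℝ), ENNReal.ofReal (exp (-x) * x ^ (s - 1)) = ENNReal.ofReal (Gamma s) := by
  rw [← ofReal_integral_eq_lintegral_ofReal (GammaIntegral_convergent hs), Gamma_eq_integral hs]
  filter_upwards [ae_restrict_mem measurableSet_Ioi] with x (hx : 0 < x)
  positivity

theorem lintegral_Ioc_exp_neg {u : ℝ} (hu : 0 ≤ u) :
    ∫⁻ z in Ioc 0 u, ENNReal.ofReal (exp (-z)) = ENNReal.ofReal (1 - exp (-u)) := by
  have hint : IntegrableOn (fun z ↦ exp (-z)) (Ioc 0 u) :=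
    (by fun_prop : Continuous fun z ↦ exp (-z)).integrableOn_Ioc
  rw [← ofReal_integral_eq_lintegral_ofReal hint (ae_of_all _ fun z ↦ (exp_pos _).le),
    ← intervalIntegral.integral_of_le hu,
    intervalIntegral.integral_comp_neg (fun z ↦ exp z)]
  simp [integral_exp]

theorem lintegral_Ioi_rpow_of_lt {a c : ℝ} (ha : a < -1) (hc : 0 < c) :
    ∫⁻ u in Ioi c, ENNReal.ofReal (u ^ a) = ENNReal.ofReal (-c ^ (a + 1) / (a + 1)) := by
  rw [← ofReal_integral_eq_lintegral_ofReal (integrableOn_Ioi_rpow_of_lt ha hc),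
    integral_Ioi_rpow_of_lt ha hc]
  filter_upwards [ae_restrict_mem measurableSet_Ioi] with u (hu : c < u)
  exact rpow_nonneg (hc.trans hu).le _

theorem lintegral_rpow_neg_mul_one_sub_exp_neg {δ : ℝ} (hδ0 : 0 < δ) (hδ1 : δ < 1) :
    ∫⁻ u in Ioi (0 : ℝ), ENNReal.ofReal (u ^ (-(1 + δ))) * ENNReal.ofReal (1 - exp (-u)) =
      ENNReal.ofReal (Gamma (1 - δ) / δ) := by
  set F : ℝ → ℝ → ℝ≥0∞ := fun u z ↦
    (Iic u).indicator (fun z ↦ ENNReal.ofReal (u ^ (-(1 + δ))) * ENNReal.ofReal (exp (-z))) z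
  have hF : Measurable (Function.uncurry F) := by
    simp only [F, Function.uncurry_def, indicator_apply, mem_Iic]
    exact Measurable.ite (measurableSet_le measurable_snd measurable_fst) (by fun_prop)
      measurable_const
  have inner_z : ∀ u ∈ Ioi (0 : ℝ), ∫⁻ z in Ioi 0, F u z =
      ENNReal.ofReal (u ^ (-(1 + δ))) * ENNReal.ofReal (1 - exp (-u)) := by
    intro u (hu : 0 < u)
    rw [lintegral_indicator measurableSet_Iic, Measure.restrict_restrict measurableSet_Iic,
      Iic_inter_Ioi, lintegral_const_mul _ (by fun_prop), lintegral_Ioc_exp_neg hu.le]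
  have inner_u : ∀ z ∈ Ioi (0 : ℝ), ∫⁻ u in Ioi 0, F u z =
      ENNReal.ofReal δ⁻¹ * ENNReal.ofReal (exp (-z) * z ^ ((1 - δ) - 1)) := by
    intro z (hz : 0 < z)
    have hF_u : (F · z) = (Ici z).indicator
        (fun u ↦ ENNReal.ofReal (exp (-z)) * ENNReal.ofReal (u ^ (-(1 + δ)))) := by
      ext u
      simp only [F, indicator_apply, mem_Iic, mem_Ici, mul_comm]
    rw [hF_u, lintegral_indicator measurableSet_Ici, Measure.restrict_restrict measurableSet_Ici,
      inter_eq_left.2 (Ici_subset_Ioi.2 hz), ← restrict_Ioi_eq_restrict_Ici,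
      lintegral_const_mul _ (by fun_prop), lintegral_Ioi_rpow_of_lt (by linarith) hz,
      ← ENNReal.ofReal_mul (exp_pos _).le, ← ENNReal.ofReal_mul (by positivity)]
    congr 1
    rw [show -(1 + δ) + 1 = -δ by ring, show 1 - δ - 1 = -δ by ring]
    field_simp
  calc _ = ∫⁻ u in Ioi 0, ∫⁻ z in Ioi 0, F u z :=
        (setLIntegral_congr_fun measurableSet_Ioi inner_z).symm
    _ = ∫⁻ z in Ioi 0, ∫⁻ u in Ioi 0, F u z := lintegral_lintegral_swap hF.aemeasurable
    _ = _ := by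
        rw [setLIntegral_congr_fun measurableSet_Ioi inner_u,
          lintegral_const_mul' _ _ ENNReal.ofReal_ne_top,
          lintegral_Ioi_exp_neg_mul_rpow_sub_one (by linarith),
          ← ENNReal.ofReal_mul (by positivity), div_eq_inv_mul]

theorem image_const_mul_rpow_Ioi {a t : ℝ} (ha : a ≠ 0) (ht : 0 < t) :
    (fun y ↦ t * y ^ a) '' Ioi 0 = Ioi 0 := by
  refine Subset.antisymm (image_subset_iff.2 fun y (hy : 0 < y) ↦ show 0 < t * y ^ a by positivity)
    fun u (hu : 0 < u) ↦ ⟨(u / t) ^ a⁻¹, mem_Ioi.2 (by positivity), ?_⟩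
  change t * ((u / t) ^ a⁻¹) ^ a = u
  rw [← rpow_mul (by positivity), inv_mul_cancel₀ ha, rpow_one]
  field_simp

theorem lintegral_Ioi_mul_comp_const_mul_rpow_neg {α t : ℝ} (hα : 0 < α) (ht : 0 < t)
    (g : ℝ → ℝ≥0∞) :
    ∫⁻ y in Ioi (0 : ℝ), ENNReal.ofReal y * g (t * y ^ (-α)) =
      ENNReal.ofReal (t ^ (2 / α) / α) *
        ∫⁻ u in Ioi (0 : ℝ), ENNReal.ofReal (u ^ (-(1 + 2 / α))) * g u := by
  have hinj : InjOn (fun y ↦ t * y ^ (-α)) (Ioi 0) := fun y₁ hy₁ y₂ hy₂ h ↦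
    (strictAntiOn_rpow_Ioi_of_exponent_neg (neg_lt_zero.2 hα)).injOn hy₁ hy₂
      (mul_left_cancel₀ ht.ne' h)
  have hderiv : ∀ y ∈ Ioi (0 : ℝ),
      HasDerivWithinAt (fun y ↦ t * y ^ (-α)) (t * (-α * y ^ (-α - 1))) (Ioi 0) y :=
    fun y hy ↦ ((hasDerivAt_rpow_const (Or.inl (ne_of_gt hy))).const_mul t).hasDerivWithinAt
  have himage := image_const_mul_rpow_Ioi (neg_ne_zero.2 hα.ne') ht
  symm
  rw [← lintegral_const_mul' _ _ ENNReal.ofReal_ne_top]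
  conv_lhs => rw [← himage]
  rw [lintegral_image_eq_lintegral_abs_deriv_mul measurableSet_Ioi hderiv hinj]
  refine setLIntegral_congr_fun measurableSet_Ioi fun y (hy : 0 < y) ↦ ?_
  rw [← mul_assoc, ← mul_assoc, ← ENNReal.ofReal_mul (abs_nonneg _),
    ← ENNReal.ofReal_mul (by positivity)]
  congr 2
  have hαy : -α * -(1 + 2 / α) = α + 2 := by field_simp
  rw [abs_mul, abs_mul, abs_neg, abs_of_pos ht, abs_of_pos hα, abs_of_pos (by positivity),
    mul_rpow ht.le (by positivity), ← rpow_mul hy.le, hαy, rpow_add hy, rpow_two,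
    rpow_neg ht.le, rpow_add ht, rpow_one, sub_eq_add_neg, rpow_add hy, rpow_neg hy.le,
    rpow_neg_one]
  field_simp

theorem MeasureTheory.lintegral_fun_norm_addHaar {E : Type*} [NormedAddCommGroup E]
    [NormedSpace ℝ E] [FiniteDimensional ℝ E] [MeasurableSpace E] [BorelSpace E] [Nontrivial E]
    (μ : Measure E) [μ.IsAddHaarMeasure] {f : ℝ → ℝ≥0∞} (hf : Measurable f) :
    ∫⁻ x, f ‖x‖ ∂μ = Module.finrank ℝ E * μ (Metric.ball 0 1) *
      ∫⁻ y in Ioi (0 : ℝ), ENNReal.ofReal (y ^ (Module.finrank ℝ E - 1)) * f y :=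
  calc ∫⁻ x, f ‖x‖ ∂μ = ∫⁻ x : ({(0)}ᶜ : Set E), f ‖x.1‖ ∂(μ.comap (↑)) := by
        rw [lintegral_subtype_comap (measurableSet_singleton _).compl (fun x ↦ f ‖x‖),
          restrict_compl_singleton]
    _ = ∫⁻ x, f x.2 ∂μ.toSphere.prod (.volumeIoiPow (Module.finrank ℝ E - 1)) := by
        simpa using μ.measurePreserving_homeomorphUnitSphereProd.lintegral_comp_emb
          (Homeomorph.measurableEmbedding _) (f ∘ Subtype.val ∘ Prod.snd)
    _ = μ.toSphere univ * ∫⁻ y : Ioi (0 : ℝ), f y ∂.volumeIoiPow (Module.finrank ℝ E - 1) := by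
        rw [lintegral_prod (fun y : Metric.sphere (0 : E) 1 × Ioi (0 : ℝ) ↦ f y.2)
          (hf.comp (measurable_subtype_coe.comp measurable_snd)).aemeasurable]
        simp [lintegral_const, mul_comm]
    _ = _ := by
        rw [Measure.volumeIoiPow, lintegral_withDensity_eq_lintegral_mul _
          (measurable_subtype_coe.pow_const _).ennreal_ofReal (g := fun y : Ioi (0 : ℝ) ↦ f y)
          (hf.comp measurable_subtype_coe),
          Measure.toSphere_apply_univ]
        exact congrArg _ (lintegral_subtype_comap measurableSet_Ioi
          (fun y ↦ ENNReal.ofReal (y ^ (Module.finrank ℝ E - 1)) * f y))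

theorem lintegral_one_sub_negExp_div_norm_rpow {α t : ℝ} (hα : 2 < α) (ht : 0 < t) :
    ∫⁻ x : EuclideanSpace ℝ (Fin 2), (1 - negExp (ENNReal.ofReal (t / ‖x‖ ^ α))) =
      ENNReal.ofReal (π * Gamma (1 - 2 / α) * t ^ (2 / α)) := by
  have hα0 : 0 < α := by linarith
  have hδ1 : 2 / α < 1 := (div_lt_one hα0).2 hα
  have hintegrand : ∀ x : EuclideanSpace ℝ (Fin 2),
      1 - negExp (ENNReal.ofReal (t / ‖x‖ ^ α)) =
        ENNReal.ofReal (1 - exp (-(t * ‖x‖ ^ (-α)))) := fun x ↦ by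
    rw [one_sub_negExp_ofReal (by positivity), rpow_neg (norm_nonneg x), div_eq_mul_inv]
  simp only [hintegrand]
  rw [lintegral_fun_norm_addHaar volume (f := fun r ↦ ENNReal.ofReal (1 - exp (-(t * r ^ (-α)))))
      (by fun_prop), finrank_euclideanSpace_fin, EuclideanSpace.volume_ball_fin_two]
  simp only [pow_one, Nat.add_one_sub_one]
  rw [lintegral_Ioi_mul_comp_const_mul_rpow_neg hα0 ht (fun u ↦ ENNReal.ofReal (1 - exp (-u))),
    lintegral_rpow_neg_mul_one_sub_exp_neg (by positivity) hδ1, ENNReal.ofReal_one, one_pow,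
    one_mul, show ((2 : ℕ) : ℝ≥0∞) = ENNReal.ofReal 2 by simp, ← ENNReal.ofReal_mul zero_le_two,
    ← ENNReal.ofReal_mul (by positivity),
    ← ENNReal.ofReal_mul (by have := Gamma_pos_of_pos (sub_pos.2 hδ1); positivity)]
  congr 1
  field_simp

theorem lintegral_rpow_gammaMeasure {a p : ℝ} (ha : 0 < a) (hap : 0 < a + p) :
    ∫⁻ x, ENNReal.ofReal (x ^ p) ∂gammaMeasure a 1 =
      ENNReal.ofReal (Gamma (a + p) / Gamma a) := by
  have hsupp : (fun x ↦ gammaPDF a 1 x * ENNReal.ofReal (x ^ p)).support ⊆ Ici 0 :=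
    fun x hx ↦ mem_Ici.2 <| not_lt.1 fun hneg ↦ hx (by simp [gammaPDF_of_neg hneg])
  have hdensity : ∀ x ∈ Ioi (0 : ℝ), gammaPDF a 1 x * ENNReal.ofReal (x ^ p) =
      ENNReal.ofReal (Gamma a)⁻¹ * ENNReal.ofReal (exp (-x) * x ^ ((a + p) - 1)) := by
    intro x (hx : 0 < x)
    rw [gammaPDF_of_nonneg hx.le, ← ENNReal.ofReal_mul (by positivity),
      ← ENNReal.ofReal_mul (by have := Gamma_pos_of_pos ha; positivity),
      show a + p - 1 = (a - 1) + p by ring, rpow_add hx, one_rpow]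
    congr 1
    ring_nf
  rw [gammaMeasure, lintegral_withDensity_eq_lintegral_mul _
      (show Measurable (gammaPDF a 1) from (measurable_gammaPDFReal a 1).ennreal_ofReal)
      (by fun_prop)]
  simp only [Pi.mul_apply]
  rw [← setLIntegral_eq_of_support_subset hsupp, ← restrict_Ioi_eq_restrict_Ici,
    setLIntegral_congr_fun measurableSet_Ioi hdensity,
    lintegral_const_mul' _ _ ENNReal.ofReal_ne_top, lintegral_Ioi_exp_neg_mul_rpow_sub_one hap,
    ← ENNReal.ofReal_mul (by have := Gamma_pos_of_pos ha; positivity), div_eq_inv_mul]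

theorem ae_pos_gammaMeasure (a r : ℝ) : ∀ᵐ x ∂gammaMeasure a r, 0 < x := by
  rw [ae_iff]
  simp only [not_lt]
  rw [show {x : ℝ | x ≤ 0} = Iic 0 from rfl, gammaMeasure, withDensity_apply _ measurableSet_Iic,
    ← restrict_Iio_eq_restrict_Iic, lintegral_gammaPDF_of_nonpos le_rfl]

theorem ppp_shot_noise_laplace_singular_general
    {Ω : Type*} [MeasurableSpace Ω] (μ : Measure Ω) [IsProbabilityMeasure μ]
    (lam' α : ℝ) (hlam' : 0 < lam') (hα : 2 < α)
    (M : ℕ) (hM : 0 < M)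
    (Φ : Ω → Measure (EuclideanSpace ℝ (Fin 2) × ℝ))
    -- Laplace functional characterization of the marked Poisson point process
    (hPGFL : ∀ f : EuclideanSpace ℝ (Fin 2) × ℝ → ℝ≥0∞, Measurable f →
      ∫⁻ ω, negExp (∫⁻ p, f p ∂(Φ ω)) ∂μ =
        negExp (∫⁻ p, (1 - negExp (f p))
          ∂((ENNReal.ofReal lam') • (volume.prod (gammaMeasure M 1))))) :
    (2 / α * Real.pi * lam' / Real.Gamma M * Real.Gamma (M + 2 / α) *
        Real.Gamma (-(2 / α)) < 0) ∧
    ∀ s : ℝ, 0 < s →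
      ∫⁻ ω, negExp (∫⁻ p, ENNReal.ofReal (s * p.2 / ‖p.1‖ ^ α) ∂(Φ ω)) ∂μ =
        ENNReal.ofReal (Real.exp ((2 / α * Real.pi * lam' / Real.Gamma M *
            Real.Gamma (M + 2 / α) * Real.Gamma (-(2 / α))) * s ^ (2 / α))) := by
  have hδ0 : 0 < 2 / α := by positivity
  have hδ1 : 2 / α < 1 := (div_lt_one (by linarith)).2 hα
  have hM0 : (0 : ℝ) < M := Nat.cast_pos.2 hM
  have hΓ1 : 0 < Gamma (1 - 2 / α) := Gamma_pos_of_pos (sub_pos.2 hδ1)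
  have hΓ : Gamma (1 - 2 / α) = -(2 / α) * Gamma (-(2 / α)) := by
    rw [← Gamma_add_one (by linarith), neg_add_eq_sub]
  refine ⟨mul_neg_of_pos_of_neg (by positivity)
    (Gamma_neg_of_neg_one_lt_of_neg (by linarith) (by linarith)), fun s hs ↦ ?_⟩
  have hf : Measurable fun p : EuclideanSpace ℝ (Fin 2) × ℝ ↦
      ENNReal.ofReal (s * p.2 / ‖p.1‖ ^ α) := by fun_prop
  have hinner : ∀ᵐ g ∂gammaMeasure M 1,
      ∫⁻ x : EuclideanSpace ℝ (Fin 2), (1 - negExp (ENNReal.ofReal (s * g / ‖x‖ ^ α))) =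
        ENNReal.ofReal (π * Gamma (1 - 2 / α) * s ^ (2 / α)) * ENNReal.ofReal (g ^ (2 / α)) := by
    filter_upwards [ae_pos_gammaMeasure M 1] with g hg
    rw [lintegral_one_sub_negExp_div_norm_rpow hα (by positivity), mul_rpow hs.le hg.le,
      ← ENNReal.ofReal_mul (by positivity), ← mul_assoc]
  have := isProbabilityMeasure_gammaMeasure hM0 one_pos
  rw [hPGFL _ hf, lintegral_smul_measure,
    lintegral_prod_symm (fun p ↦ 1 - negExp (ENNReal.ofReal (s * p.2 / ‖p.1‖ ^ α)))
      (measurable_const.sub (measurable_negExp.comp hf)).aemeasurable,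
    lintegral_congr_ae hinner, lintegral_const_mul' _ _ ENNReal.ofReal_ne_top,
    lintegral_rpow_gammaMeasure hM0 (by positivity), smul_eq_mul,
    ← ENNReal.ofReal_mul (by positivity), ← ENNReal.ofReal_mul hlam'.le,
    negExp_ofReal (by positivity), hΓ]
  congr 2
  field_simp

/-- **Laplace transform of Poisson shot noise, singular path loss.**
For the singular path loss model (`ε = 0`), the shot noise
`S = Σ_{(x,g)∈Φ} g‖x‖^{−α}` of a marked PPP with intensity
`λ'·Leb ⊗ Gamma(M,1)` satisfies `E[e^{−sS}] = exp(Γ_δ s^δ)` for `s > 0`,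
where `δ = 2/α ∈ (0,1)` and `Γ_δ = (δπλ'/Γ(M))·Γ(M+δ)·Γ(−δ) < 0`. -/
theorem ppp_shot_noise_laplace_singular
    {Ω : Type*} [MeasurableSpace Ω] (μ : Measure Ω) [IsProbabilityMeasure μ]
    (lam' α : ℝ) (hlam' : 0 < lam') (hα : 2 < α)
    (M : ℕ) (hM : 0 < M)
    (Φ : Ω → Measure (EuclideanSpace ℝ (Fin 2) × ℝ)) (hΦ : Measurable Φ)
    -- Laplace functional characterization of the marked Poisson point process
    (hPGFL : ∀ f : EuclideanSpace ℝ (Fin 2) × ℝ → ℝ≥0∞, Measurable f →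
      ∫⁻ ω, negExp (∫⁻ p, f p ∂(Φ ω)) ∂μ =
        negExp (∫⁻ p, (1 - negExp (f p))
          ∂((ENNReal.ofReal lam') • (volume.prod (gammaMeasure M 1))))) :
    (2 / α * Real.pi * lam' / Real.Gamma M * Real.Gamma (M + 2 / α) *
        Real.Gamma (-(2 / α)) < 0) ∧
    ∀ s : ℝ, 0 < s →
      ∫⁻ ω, negExp (∫⁻ p, ENNReal.ofReal (s * p.2 / ‖p.1‖ ^ α) ∂(Φ ω)) ∂μ =
        ENNReal.ofReal (Real.exp ((2 / α * Real.pi * lam' / Real.Gamma M *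
            Real.Gamma (M + 2 / α) * Real.Gamma (-(2 / α))) * s ^ (2 / α))) :=
  ppp_shot_noise_laplace_singular_general μ lam' α hlam' hα M hM Φ hPGFL
end

section
/- For 0 < δ < 1, a positive integer M, and s > 0, the integral ∫₀^∞ (1 − (1 + s/r^α)^{−M}) r dr with α = 2/δ equals −(δ/2)·s^δ·Γ(M+δ)Γ(−δ)/Γ(M). In particular the integral is finite and positive. -/
/-!
Substituting `r = x ^ (-δ/2)` turns the integral into `(δ/2) ∫₀^∞ x^(-δ-1) (1 - (1 + s x)^(-M)) dx`.
Telescoping `1 - (1 + y)^(-M) = ∑_{k<M} y (1 + y)^(-(k+1))` splits this into the Beta integrals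
`∫₀^∞ x^(a-1) (1 + s x)^(-(a+b)) dx = s^(-a) Γ(a) Γ(b) / Γ(a+b)` with `a = 1 - δ`, `b = k + δ`,
each computed by Fubini from the kernel `x^(a-1) t^(a+b-1) e^(-(1+sx)t)`. Finally
`δ ∑_{k<M} Γ(k+δ)/Γ(k+1) = Γ(M+δ)/Γ(M)` and `Γ(1-δ) = -δ Γ(-δ)`.
-/

open MeasureTheory Real Set

lemma integrableOn_rpow_mul_exp_neg_mul_Ioi {a r : ℝ} (ha : 0 < a) (hr : 0 < r) :
    IntegrableOn (fun t : ℝ => t ^ (a - 1) * exp (-(r * t))) (Ioi 0) := by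
  simpa only [rpow_one, neg_mul] using
    integrableOn_rpow_mul_exp_neg_mul_rpow (p := 1) (by linarith) one_pos hr

noncomputable def betaKernel (a b s x t : ℝ) : ℝ :=
  x ^ (a - 1) * t ^ (a + b - 1) * exp (-((1 + s * x) * t))

noncomputable def betaIntegrand (a b s x : ℝ) : ℝ :=
  x ^ (a - 1) * (1 + s * x) ^ (-(a + b))

section Beta

variable {a b s : ℝ}

lemma betaKernel_eq_mul_left (x t : ℝ) :
    betaKernel a b s x t = t ^ (a + b - 1) * exp (-t) * (x ^ (a - 1) * exp (-(s * t * x))) := by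
  rw [betaKernel, show -((1 + s * x) * t) = -t + -(s * t * x) by ring, exp_add]
  ring

lemma integrableOn_betaKernel_fst (ha : 0 < a) (hs : 0 < s) {t : ℝ} (ht : 0 < t) :
    IntegrableOn (fun x => betaKernel a b s x t) (Ioi 0) := by
  simp_rw [betaKernel_eq_mul_left]
  exact (integrableOn_rpow_mul_exp_neg_mul_Ioi ha (mul_pos hs ht)).const_mul _

lemma integral_betaKernel_fst (ha : 0 < a) (hs : 0 < s) {t : ℝ} (ht : 0 < t) :
    ∫ x in Ioi 0, betaKernel a b s x t = s ^ (-a) * Gamma a * (exp (-t) * t ^ (b - 1)) := by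
  simp_rw [betaKernel_eq_mul_left]
  rw [integral_const_mul, integral_rpow_mul_exp_neg_mul_Ioi ha (mul_pos hs ht), one_div,
    mul_inv, mul_rpow (inv_nonneg.2 hs.le) (inv_nonneg.2 ht.le), inv_rpow hs.le, inv_rpow ht.le,
    ← rpow_neg hs.le, ← rpow_neg ht.le]
  have ht_pow : t ^ (a + b - 1) * t ^ (-a) = t ^ (b - 1) := by
    rw [← rpow_add ht]; ring_nf
  rw [← ht_pow]
  ring

lemma integral_betaKernel_snd (hab : 0 < a + b) {x : ℝ} (hx : 0 < 1 + s * x) :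
    ∫ t in Ioi 0, betaKernel a b s x t = Gamma (a + b) * betaIntegrand a b s x := by
  simp only [betaKernel, mul_assoc]
  rw [integral_const_mul, integral_rpow_mul_exp_neg_mul_Ioi hab hx, one_div, inv_rpow hx.le,
    ← rpow_neg hx.le, betaIntegrand]
  ring

lemma integrable_betaKernel (ha : 0 < a) (hb : 0 < b) (hs : 0 < s) :
    Integrable (Function.uncurry (betaKernel a b s))
      ((volume.restrict (Ioi 0)).prod (volume.restrict (Ioi 0))) := by
  have hmeas : Measurable (Function.uncurry (betaKernel a b s)) := by
    unfold Function.uncurry betaKernel; fun_prop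
  refine (integrable_prod_iff' hmeas.aestronglyMeasurable).2 ⟨?_, ?_⟩
  · filter_upwards [ae_restrict_mem measurableSet_Ioi] with t ht
    exact integrableOn_betaKernel_fst ha hs ht
  · refine ((GammaIntegral_convergent hb).const_mul (s ^ (-a) * Gamma a)).congr ?_
    filter_upwards [ae_restrict_mem measurableSet_Ioi] with t (ht : 0 < t)
    rw [← integral_betaKernel_fst ha hs ht]
    refine setIntegral_congr_fun measurableSet_Ioi fun x (hx : 0 < x) => ?_
    exact (Real.norm_of_nonneg (by unfold betaKernel; positivity)).symm

lemma integrableOn_betaIntegrand (ha : 0 < a) (hb : 0 < b) (hs : 0 < s) :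
    IntegrableOn (betaIntegrand a b s) (Ioi 0) := by
  have hΓ : IsUnit (Gamma (a + b)) := (Gamma_pos_of_pos (add_pos ha hb)).ne'.isUnit
  refine (integrable_const_mul_iff hΓ _).1 <|
    (integrable_betaKernel ha hb hs).integral_prod_left.congr ?_
  filter_upwards [ae_restrict_mem measurableSet_Ioi] with x (hx : 0 < x)
  exact integral_betaKernel_snd (add_pos ha hb) (by positivity)

theorem integral_betaIntegrand (ha : 0 < a) (hb : 0 < b) (hs : 0 < s) :
    ∫ x in Ioi 0, betaIntegrand a b s x = s ^ (-a) * (Gamma a * Gamma b / Gamma (a + b)) := by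
  have hswap := integral_integral_swap (integrable_betaKernel ha hb hs)
  rw [setIntegral_congr_fun measurableSet_Ioi fun x (hx : 0 < x) =>
      integral_betaKernel_snd (add_pos ha hb) (by positivity : 0 < 1 + s * x),
    setIntegral_congr_fun measurableSet_Ioi fun t (ht : 0 < t) => integral_betaKernel_fst ha hs ht,
    integral_const_mul, integral_const_mul, ← Gamma_eq_integral hb] at hswap
  have hΓ : Gamma (a + b) ≠ 0 := (Gamma_pos_of_pos (add_pos ha hb)).ne'
  field_simp
  linear_combination hswap

end Beta

lemma one_sub_rpow_neg_natCast_eq_sum {y : ℝ} (hy : 0 < 1 + y) (M : ℕ) :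
    1 - (1 + y) ^ (-(M : ℝ)) = ∑ k ∈ Finset.range M, y * (1 + y) ^ (-((k : ℝ) + 1)) := by
  induction M with
  | zero => simp
  | succ M ih =>
    rw [Finset.sum_range_succ, ← ih, Nat.cast_succ,
      show -(M : ℝ) = -((M : ℝ) + 1) + 1 by ring, rpow_add_one hy.ne']
    ring

lemma mul_sum_Gamma_add_div_Gamma_succ {δ : ℝ} (hδ : 0 < δ) (M : ℕ) :
    δ * ∑ k ∈ Finset.range M, Gamma (k + δ) / Gamma (k + 1) = Gamma (M + δ) / Gamma M := by
  induction M with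
  | zero => simp
  | succ M ih =>
    rw [Finset.sum_range_succ, mul_add, ih, Nat.cast_succ, add_right_comm,
      Gamma_add_one (by positivity : (M : ℝ) + δ ≠ 0)]
    rcases Nat.eq_zero_or_pos M with rfl | hM
    · simp
    · have hM : (0 : ℝ) < M := Nat.cast_pos.2 hM
      rw [Gamma_add_one hM.ne']
      have := (Gamma_pos_of_pos hM).ne'
      field_simp

noncomputable def radialIntegrand (δ s : ℝ) (M : ℕ) (r : ℝ) : ℝ :=
  (1 - (1 + s / r ^ (2 / δ)) ^ (-(M : ℝ))) * r

section Radial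

variable {δ s : ℝ} (M : ℕ)

lemma radialIntegrand_comp_rpow (hδ : 0 < δ) (hs : 0 < s) {x : ℝ} (hx : 0 < x) :
    (|-(δ / 2)| * x ^ (-(δ / 2) - 1)) • radialIntegrand δ s M (x ^ (-(δ / 2))) =
      ∑ k ∈ Finset.range M, δ / 2 * s * betaIntegrand (1 - δ) (k + δ) s x := by
  have hpow : (x ^ (-(δ / 2))) ^ (2 / δ) = x⁻¹ := by
    rw [← rpow_mul hx.le, show -(δ / 2) * (2 / δ) = -1 by field_simp, rpow_neg_one]
  have hx_pow : x ^ (-(δ / 2) - 1) * x ^ (-(δ / 2)) * x = x ^ ((1 - δ) - 1) := by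
    rw [← rpow_add hx, ← rpow_add_one hx.ne']; ring_nf
  rw [radialIntegrand, hpow, div_inv_eq_mul, one_sub_rpow_neg_natCast_eq_sum (by positivity),
    smul_eq_mul, abs_neg, abs_of_pos (half_pos hδ), Finset.sum_mul, Finset.mul_sum]
  refine Finset.sum_congr rfl fun k _ => ?_
  rw [betaIntegrand, ← hx_pow, show (1 - δ) + (k + δ) = (k : ℝ) + 1 by ring]
  ring

lemma integrableOn_radialIntegrand (hδ0 : 0 < δ) (hδ1 : δ < 1) (hs : 0 < s) :
    IntegrableOn (radialIntegrand δ s M) (Ioi 0) := by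
  rw [← integrableOn_Ioi_comp_rpow_iff _ (by linarith : -(δ / 2) ≠ 0)]
  refine (integrableOn_congr_fun (fun x hx => radialIntegrand_comp_rpow M hδ0 hs hx)
    measurableSet_Ioi).2 ?_
  exact integrable_finsetSum _ fun k _ =>
    (integrableOn_betaIntegrand (by linarith) (by positivity) hs).const_mul _

lemma integral_radialIntegrand (hδ0 : 0 < δ) (hδ1 : δ < 1) (hs : 0 < s) :
    ∫ r in Ioi 0, radialIntegrand δ s M r =
      s ^ δ * Gamma (1 - δ) * Gamma (M + δ) / (2 * Gamma M) := by
  rw [← integral_comp_rpow_Ioi _ (by linarith : -(δ / 2) ≠ 0),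
    setIntegral_congr_fun measurableSet_Ioi fun x hx => radialIntegrand_comp_rpow M hδ0 hs hx,
    integral_finsetSum _ fun k _ =>
      (integrableOn_betaIntegrand (by linarith) (by positivity) hs).const_mul _]
  have hs_pow : s * s ^ (-(1 - δ)) = s ^ δ := by
    rw [← rpow_one_add' hs.le (by linarith)]; ring_nf
  calc ∑ k ∈ Finset.range M, ∫ x in Ioi 0, δ / 2 * s * betaIntegrand (1 - δ) (k + δ) s x
      = ∑ k ∈ Finset.range M, s ^ δ * Gamma (1 - δ) / 2 * (δ * (Gamma (k + δ) / Gamma (k + 1))) :=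
        Finset.sum_congr rfl fun k _ => by
          rw [integral_const_mul, integral_betaIntegrand (by linarith) (by positivity) hs,
            show 1 - δ + (k + δ) = (k : ℝ) + 1 by ring, ← hs_pow]
          ring
    _ = s ^ δ * Gamma (1 - δ) * Gamma (M + δ) / (2 * Gamma M) := by
      rw [← Finset.mul_sum, ← Finset.mul_sum, mul_sum_Gamma_add_div_Gamma_succ hδ0]
      ring

end Radial

/-- **Radial integral for the singular path loss PGFL computation.**
For `0 < δ < 1`, a positive integer `M`, `s > 0`, and `α = 2/δ`,
`∫₀^∞ (1 − (1 + s/r^α)^{−M}) r dr = −(δ/2)·s^δ·Γ(M+δ)Γ(−δ)/Γ(M)`;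
in particular the integral is finite and positive. -/
theorem radial_pgfl_integral (δ : ℝ) (hδ0 : 0 < δ) (hδ1 : δ < 1)
    (M : ℕ) (hM : 0 < M) (s : ℝ) (hs : 0 < s) :
    (∫ r in Ioi (0 : ℝ), (1 - (1 + s / r ^ (2 / δ)) ^ (-(M : ℝ))) * r =
      -(δ / 2) * s ^ δ * Real.Gamma (M + δ) * Real.Gamma (-δ) / Real.Gamma M) ∧
    IntegrableOn (fun r : ℝ => (1 - (1 + s / r ^ (2 / δ)) ^ (-(M : ℝ))) * r)
      (Ioi 0) ∧
    0 < ∫ r in Ioi (0 : ℝ), (1 - (1 + s / r ^ (2 / δ)) ^ (-(M : ℝ))) * r := by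
  have hval := integral_radialIntegrand M hδ0 hδ1 hs
  unfold radialIntegrand at hval
  have hΓ_pos : 0 < Gamma (1 - δ) := Gamma_pos_of_pos (by linarith)
  have hM_pos : (0 : ℝ) < M := Nat.cast_pos.2 hM
  refine ⟨?_, integrableOn_radialIntegrand M hδ0 hδ1 hs, ?_⟩
  · rw [hval, sub_eq_neg_add, Gamma_add_one (neg_ne_zero.2 hδ0.ne')]
    ring
  · rw [hval]
    positivity
end

section
/- Let X and Y be independent nonnegative random variables where the Laplace transform of X is M_X(z) = exp(Γ_δ (zP_b)^δ) with Γ_δ < 0, 0 < δ < 1, P_b > 0, and Y = P_u σ² E with E exponential(1), P_u σ² > 0. Then E[ln(1 + X/(Y+1))] = ∫₀^∞ (1 − exp(Γ_δ (zP_b)^δ)) e^{−z} / (z(1 + P_u σ² z)) dz, and this integral is finite. -/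
/-!
Hamdi's lemma: by Frullani's integral, `log (1 + x / y) = ∫₀^∞ (e^{-yz} - e^{-(x+y)z}) / z dz`
for `x ≥ 0`, `y > 0`. Taking `x = X`, `y = Y + 1` and exchanging expectation and `z`-integral
(Tonelli: everything is nonnegative), independence factors `E e^{-z(X+Y)} = M_X(z) M_Y(z)`, so
`E[log (1 + X / (Y + 1))] = ∫₀^∞ (1 - M_X(z)) M_Y(z) e^{-z} / z dz`. For `Y = P_u σ² E` with
`E ~ Exp(1)`, `M_Y(z) = 1 / (1 + P_u σ² z)`. The integral is finite because
`1 - e^{Γ_δ (z P_b)^δ} ≤ -Γ_δ P_b^δ z^δ` bounds the integrand by a multiple of `z^{δ-1} e^{-z}`.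
-/

open MeasureTheory ProbabilityTheory Real Set

section Frullani

variable {b c : ℝ}

theorem exp_neg_mul_sub_exp_neg_mul_div_nonneg (hbc : b ≤ c) {z : ℝ} (hz : 0 ≤ z) :
    0 ≤ (rexp (-(b * z)) - rexp (-(c * z))) / z := by
  have : rexp (-(c * z)) ≤ rexp (-(b * z)) := by gcongr
  exact div_nonneg (sub_nonneg.2 this) hz

theorem integrableOn_exp_neg_mul_sub_exp_neg_mul_div (hb : 0 < b) (hbc : b ≤ c) :
    IntegrableOn (fun z => (rexp (-(b * z)) - rexp (-(c * z))) / z) (Ioi 0) := by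
  have hmeas : Measurable fun z : ℝ => (rexp (-(b * z)) - rexp (-(c * z))) / z := by fun_prop
  refine ((exp_neg_integrableOn_Ioi 0 hb).const_mul (c - b)).mono' hmeas.aestronglyMeasurable ?_
  filter_upwards [ae_restrict_mem measurableSet_Ioi] with z (hz : 0 < z)
  rw [norm_of_nonneg (exp_neg_mul_sub_exp_neg_mul_div_nonneg hbc hz.le), div_le_iff₀ hz]
  -- `e^{-bz} - e^{-cz} = e^{-bz} (1 - e^{-(c-b)z}) ≤ e^{-bz} (c-b) z`
  have h := add_one_le_exp (-((c - b) * z))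
  have hsplit : rexp (-(c * z)) = rexp (-(b * z)) * rexp (-((c - b) * z)) := by
    rw [← exp_add]; ring_nf
  rw [hsplit, neg_mul]
  nlinarith [exp_pos (-(b * z))]

theorem lintegral_exp_neg_mul_sub_exp_neg_mul_div (hb : 0 < b) (hbc : b ≤ c) :
    ∫⁻ z in Ioi 0, ENNReal.ofReal ((rexp (-(b * z)) - rexp (-(c * z))) / z) =
      ENNReal.ofReal (log (c / b)) := by
  have hc : 0 < c := hb.trans_le hbc
  have hint := integrableOn_exp_neg_mul_sub_exp_neg_mul_div hb hbc
  have hcont : Continuous fun x : ℝ => rexp (-x) := by fun_prop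
  have hfrullani := Frullani.integral_Ioi_eq (f := fun x => rexp (-x)) (L := 1) (R := 0)
    (hcont.locallyIntegrable.locallyIntegrableOn _) hb hc
    (by simpa using (hcont.tendsto 0).mono_left nhdsWithin_le_nhds)
    tendsto_exp_neg_atTop_nhds_zero
    (by simpa only [smul_eq_mul, inv_mul_eq_div] using hint)
  simp only [smul_eq_mul, inv_mul_eq_div, sub_zero, mul_one] at hfrullani
  rw [← hfrullani, ofReal_integral_eq_lintegral_ofReal hint]
  filter_upwards [ae_restrict_mem measurableSet_Ioi] with z (hz : 0 < z)
  exact exp_neg_mul_sub_exp_neg_mul_div_nonneg hbc hz.le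

end Frullani

section Hamdi

variable {Ω : Type*} [MeasurableSpace Ω] {μ : Measure Ω} [IsFiniteMeasure μ] {X Y : Ω → ℝ}

theorem integrable_exp_mul_of_nonpos_of_nonneg {t : ℝ} (ht : t ≤ 0) (hX : AEMeasurable X μ)
    (hX0 : 0 ≤ᵐ[μ] X) : Integrable (fun ω => rexp (t * X ω)) μ := by
  refine .of_mem_Icc 0 1 (measurable_exp.comp_aemeasurable (hX.const_mul t)) ?_
  filter_upwards [hX0] with ω hω
  exact ⟨(exp_pos _).le, exp_le_one_iff.2 (mul_nonpos_of_nonpos_of_nonneg ht hω)⟩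

theorem lintegral_exp_neg_mul_sub_exp_neg_mul_div_eq_mgf
    (hX : Measurable X) (hY : Measurable Y) (hX0 : 0 ≤ᵐ[μ] X) (hY0 : 0 ≤ᵐ[μ] Y)
    (hXY : IndepFun X Y μ) {z : ℝ} (hz : 0 < z) :
    ∫⁻ ω, ENNReal.ofReal ((rexp (-((Y ω + 1) * z)) - rexp (-((X ω + Y ω + 1) * z))) / z) ∂μ =
      ENNReal.ofReal ((1 - mgf X μ (-z)) * mgf Y μ (-z) * rexp (-z) / z) := by
  have hsplit : ∀ ω, (rexp (-((Y ω + 1) * z)) - rexp (-((X ω + Y ω + 1) * z))) / z =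
      rexp (-z) * (rexp (-z * Y ω) - rexp (-z * (X + Y) ω)) / z := by
    intro ω
    simp only [Pi.add_apply, mul_sub, ← exp_add]
    ring_nf
  have hXY0 : 0 ≤ᵐ[μ] X + Y := by
    filter_upwards [hX0, hY0] with ω hXω hYω using add_nonneg hXω hYω
  have hintY := integrable_exp_mul_of_nonpos_of_nonneg (neg_nonpos.2 hz.le) hY.aemeasurable hY0
  have hintXY := integrable_exp_mul_of_nonpos_of_nonneg (neg_nonpos.2 hz.le)
    (hX.add hY).aemeasurable hXY0
  have hint : Integrable
      (fun ω => rexp (-z) * (rexp (-z * Y ω) - rexp (-z * (X + Y) ω)) / z) μ :=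
    ((hintY.sub hintXY).const_mul _).div_const _
  simp only [hsplit]
  rw [← ofReal_integral_eq_lintegral_ofReal hint]
  · rw [integral_div, integral_const_mul, integral_sub hintY hintXY]
    change ENNReal.ofReal (rexp (-z) * (mgf Y μ (-z) - mgf (X + Y) μ (-z)) / z) = _
    rw [hXY.mgf_add' hX.aestronglyMeasurable hY.aestronglyMeasurable]
    ring_nf
  · filter_upwards [hX0] with ω (hXω : 0 ≤ X ω)
    rw [← hsplit, add_assoc]
    exact exp_neg_mul_sub_exp_neg_mul_div_nonneg (le_add_of_nonneg_left hXω) hz.le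

theorem lintegral_log_one_add_div_eq_lintegral_mgf (hX : Measurable X) (hY : Measurable Y)
    (hX0 : 0 ≤ᵐ[μ] X) (hY0 : 0 ≤ᵐ[μ] Y) (hXY : IndepFun X Y μ) :
    ∫⁻ ω, ENNReal.ofReal (log (1 + X ω / (Y ω + 1))) ∂μ =
      ∫⁻ z in Ioi 0, ENNReal.ofReal ((1 - mgf X μ (-z)) * mgf Y μ (-z) * rexp (-z) / z) := by
  have hfrullani : ∀ᵐ ω ∂μ, ENNReal.ofReal (log (1 + X ω / (Y ω + 1))) = ∫⁻ z in Ioi 0,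
      ENNReal.ofReal ((rexp (-((Y ω + 1) * z)) - rexp (-((X ω + Y ω + 1) * z))) / z) := by
    filter_upwards [hX0, hY0] with ω (hXω : 0 ≤ X ω) (hYω : 0 ≤ Y ω)
    have hY1 : 0 < Y ω + 1 := by positivity
    rw [lintegral_exp_neg_mul_sub_exp_neg_mul_div hY1 (by linarith), add_assoc,
      add_div, div_self hY1.ne', add_comm]
  rw [lintegral_congr_ae hfrullani, lintegral_lintegral_swap (by fun_prop)]
  exact setLIntegral_congr_fun measurableSet_Ioi fun z hz =>
    lintegral_exp_neg_mul_sub_exp_neg_mul_div_eq_mgf hX hY hX0 hY0 hXY hz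

end Hamdi

section Exponential

theorem ae_nonneg_expMeasure (r : ℝ) : ∀ᵐ x ∂expMeasure r, 0 ≤ x := by
  rw [ae_iff]
  simp only [not_le]
  change expMeasure r (Iio 0) = 0
  rw [expMeasure, gammaMeasure, withDensity_apply _ measurableSet_Iio]
  exact lintegral_gammaPDF_of_nonpos le_rfl

theorem mgf_id_expMeasure {r t : ℝ} (hr : 0 < r) (ht : t < r) :
    mgf id (expMeasure r) t = r / (r - t) := by
  have hmeas : Measurable (exponentialPDF r) := (measurable_exponentialPDFReal r).ennreal_ofReal
  have hdens : ∀ x, (exponentialPDF r x).toReal • rexp (t * x) =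
      (Ici 0).indicator (fun x => r * rexp ((t - r) * x)) x := by
    intro x
    rw [exponentialPDF_eq, ENNReal.toReal_ofReal (by split_ifs <;> positivity), smul_eq_mul]
    split_ifs with hx
    · rw [indicator_of_mem (mem_Ici.2 hx), mul_assoc, ← exp_add]
      ring_nf
    · rw [indicator_of_notMem (by simpa using hx), zero_mul]
  change ∫ x, rexp (t * x) ∂volume.withDensity (exponentialPDF r) = _
  rw [integral_withDensity_eq_integral_toReal_smul hmeas
    (ae_of_all _ fun _ => ENNReal.ofReal_lt_top)]
  simp only [hdens]
  rw [integral_indicator measurableSet_Ici, integral_Ici_eq_integral_Ioi, integral_const_mul,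
    integral_exp_mul_Ioi (by linarith) 0, mul_zero, exp_zero, neg_div, ← div_neg, neg_sub,
    mul_one_div]

variable {Ω : Type*} [MeasurableSpace Ω] {μ : Measure Ω} {E : Ω → ℝ} {r : ℝ}

theorem ae_nonneg_of_map_eq_expMeasure (hE : AEMeasurable E μ) (hlaw : μ.map E = expMeasure r) :
    ∀ᵐ ω ∂μ, 0 ≤ E ω :=
  ae_of_ae_map hE (hlaw ▸ ae_nonneg_expMeasure r)

theorem mgf_of_map_eq_expMeasure (hE : AEMeasurable E μ) (hlaw : μ.map E = expMeasure r)
    (hr : 0 < r) {t : ℝ} (ht : t < r) : mgf E μ t = r / (r - t) := by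
  rw [← mgf_id_map hE, hlaw, mgf_id_expMeasure hr ht]

end Exponential

section ShotNoise

variable {Γ δ Pb z : ℝ}

theorem one_sub_exp_mul_rpow_nonneg (hΓ : Γ ≤ 0) (hPb : 0 ≤ Pb) (hz : 0 ≤ z) :
    0 ≤ 1 - rexp (Γ * (z * Pb) ^ δ) :=
  sub_nonneg.2 (exp_le_one_iff.2 (mul_nonpos_of_nonpos_of_nonneg hΓ (by positivity)))

theorem one_sub_exp_mul_rpow_le (hPb : 0 ≤ Pb) (hz : 0 ≤ z) :
    1 - rexp (Γ * (z * Pb) ^ δ) ≤ -Γ * Pb ^ δ * z ^ δ := by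
  have := add_one_le_exp (Γ * (z * Pb) ^ δ)
  rw [mul_rpow hz hPb] at this ⊢
  linarith

theorem one_sub_exp_mul_rpow_mul_exp_neg_div_nonneg {a : ℝ} (hΓ : Γ ≤ 0) (hPb : 0 ≤ Pb)
    (ha : 0 ≤ a) (hz : 0 ≤ z) :
    0 ≤ (1 - rexp (Γ * (z * Pb) ^ δ)) * rexp (-z) / (z * (1 + a * z)) := by
  have := one_sub_exp_mul_rpow_nonneg (δ := δ) hΓ hPb hz
  positivity

theorem integrableOn_one_sub_exp_mul_rpow_mul_exp_neg_div {a : ℝ} (hΓ : Γ ≤ 0) (hδ : 0 < δ)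
    (hPb : 0 ≤ Pb) (ha : 0 ≤ a) :
    IntegrableOn (fun z => (1 - rexp (Γ * (z * Pb) ^ δ)) * rexp (-z) / (z * (1 + a * z)))
      (Ioi 0) := by
  have hmeas : Measurable fun z : ℝ =>
      (1 - rexp (Γ * (z * Pb) ^ δ)) * rexp (-z) / (z * (1 + a * z)) := by fun_prop
  refine ((GammaIntegral_convergent hδ).const_mul (-Γ * Pb ^ δ)).mono'
    hmeas.aestronglyMeasurable ?_
  filter_upwards [ae_restrict_mem measurableSet_Ioi] with z (hz : 0 < z)
  have hnum := mul_nonneg (one_sub_exp_mul_rpow_nonneg (δ := δ) hΓ hPb hz.le) (exp_pos (-z)).le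
  have hden : z ≤ z * (1 + a * z) := le_mul_of_one_le_right hz.le (by nlinarith)
  rw [norm_of_nonneg (one_sub_exp_mul_rpow_mul_exp_neg_div_nonneg hΓ hPb ha hz.le)]
  calc (1 - rexp (Γ * (z * Pb) ^ δ)) * rexp (-z) / (z * (1 + a * z))
      ≤ (1 - rexp (Γ * (z * Pb) ^ δ)) * rexp (-z) / z := div_le_div_of_nonneg_left hnum hz hden
    _ ≤ -Γ * Pb ^ δ * z ^ δ * rexp (-z) / z := by
      gcongr
      exact one_sub_exp_mul_rpow_le hPb hz.le
    _ = -Γ * Pb ^ δ * (rexp (-z) * z ^ (δ - 1)) := by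
      rw [rpow_sub_one hz.ne']
      ring

end ShotNoise

theorem average_rate_shot_noise_exponential_LI_general
    {Ω : Type*} [MeasurableSpace Ω] (μ : Measure Ω) [IsProbabilityMeasure μ]
    (Γδ δ Pb a : ℝ) (hΓ : Γδ < 0) (hδ0 : 0 < δ)
    (hPb : 0 < Pb) (ha : 0 < a)  -- `a = P_u σ²`
    (X E : Ω → ℝ) (hX : Measurable X) (hE : Measurable E)
    (hXpos : ∀ ω, 0 ≤ X ω)
    (hXlaw : ∀ z : ℝ, 0 < z →
      ∫ ω, Real.exp (-(z * X ω)) ∂μ = Real.exp (Γδ * (z * Pb) ^ δ))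
    (hElaw : Measure.map E μ = expMeasure 1)
    (hindep : IndepFun X E μ) :
    (∫ ω, Real.log (1 + X ω / (a * E ω + 1)) ∂μ =
      ∫ z in Ioi (0 : ℝ),
        (1 - Real.exp (Γδ * (z * Pb) ^ δ)) * Real.exp (-z) / (z * (1 + a * z))) ∧
    IntegrableOn (fun z : ℝ =>
        (1 - Real.exp (Γδ * (z * Pb) ^ δ)) * Real.exp (-z) / (z * (1 + a * z)))
      (Ioi 0) := by
  have hY0 : 0 ≤ᵐ[μ] fun ω => a * E ω := by
    filter_upwards [ae_nonneg_of_map_eq_expMeasure hE.aemeasurable hElaw] with ω (hω : 0 ≤ E ω)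
    exact mul_nonneg ha.le hω
  have hrate : ∫⁻ ω, ENNReal.ofReal (log (1 + X ω / (a * E ω + 1))) ∂μ =
      ∫⁻ z in Ioi 0, ENNReal.ofReal
        ((1 - rexp (Γδ * (z * Pb) ^ δ)) * rexp (-z) / (z * (1 + a * z))) := by
    rw [lintegral_log_one_add_div_eq_lintegral_mgf hX (hE.const_mul a) (ae_of_all _ hXpos) hY0
      (hindep.comp measurable_id (measurable_const_mul a))]
    refine setLIntegral_congr_fun measurableSet_Ioi fun z (hz : 0 < z) => ?_
    rw [mgf, ← hXlaw z hz, mgf_const_mul,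
      mgf_of_map_eq_expMeasure hE.aemeasurable hElaw one_pos (by nlinarith)]
    simp only [neg_mul, mul_neg, sub_neg_eq_add]
    congr 1
    field_simp
  have hlog_nonneg : 0 ≤ᵐ[μ] fun ω => log (1 + X ω / (a * E ω + 1)) := by
    filter_upwards [hY0] with ω (hω : 0 ≤ a * E ω)
    exact log_nonneg (le_add_of_nonneg_right (div_nonneg (hXpos ω) (by linarith)))
  have hlog_meas : Measurable fun ω => log (1 + X ω / (a * E ω + 1)) := by fun_prop
  have hint := integrableOn_one_sub_exp_mul_rpow_mul_exp_neg_div hΓ.le hδ0 hPb.le ha.le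
  refine ⟨?_, hint⟩
  rw [integral_eq_lintegral_of_nonneg_ae hlog_nonneg hlog_meas.aestronglyMeasurable, hrate,
    integral_eq_lintegral_of_nonneg_ae _ hint.aestronglyMeasurable]
  filter_upwards [ae_restrict_mem measurableSet_Ioi] with z (hz : 0 < z)
  exact one_sub_exp_mul_rpow_mul_exp_neg_div_nonneg hΓ.le hPb.le ha.le hz.le

/-- **Average downlink rate with shot-noise signal and exponential loopback
interference.** If `X` has Laplace transform `M_X(z) = exp(Γ_δ (zP_b)^δ)`
(`Γ_δ < 0`, `0 < δ < 1`, `P_b > 0`) and `Y = P_u σ² E` with `E ~ Exp(1)`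
(`P_u σ² > 0`) independent of `X`, then
`E[ln(1 + X/(Y+1))] = ∫₀^∞ (1 − exp(Γ_δ (zP_b)^δ)) e^{−z}/(z(1 + P_u σ² z)) dz`,
and this integral is finite. -/
theorem average_rate_shot_noise_exponential_LI
    {Ω : Type*} [MeasurableSpace Ω] (μ : Measure Ω) [IsProbabilityMeasure μ]
    (Γδ δ Pb a : ℝ) (hΓ : Γδ < 0) (hδ0 : 0 < δ) (hδ1 : δ < 1)
    (hPb : 0 < Pb) (ha : 0 < a)  -- `a = P_u σ²`
    (X E : Ω → ℝ) (hX : Measurable X) (hE : Measurable E)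
    (hXpos : ∀ ω, 0 ≤ X ω)
    (hXlaw : ∀ z : ℝ, 0 < z →
      ∫ ω, Real.exp (-(z * X ω)) ∂μ = Real.exp (Γδ * (z * Pb) ^ δ))
    (hElaw : Measure.map E μ = expMeasure 1)
    (hindep : IndepFun X E μ) :
    (∫ ω, Real.log (1 + X ω / (a * E ω + 1)) ∂μ =
      ∫ z in Ioi (0 : ℝ),
        (1 - Real.exp (Γδ * (z * Pb) ^ δ)) * Real.exp (-z) / (z * (1 + a * z))) ∧
    IntegrableOn (fun z : ℝ =>
        (1 - Real.exp (Γδ * (z * Pb) ^ δ)) * Real.exp (-z) / (z * (1 + a * z)))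
      (Ioi 0) :=
  average_rate_shot_noise_exponential_LI_general μ Γδ δ Pb a hΓ hδ0 hPb ha X E hX hE hXpos hXlaw
    hElaw hindep
end

section
/- For b = 0 (no loopback interference), ∫₀^∞ z^{δ k − 1} e^{−z} dz = Γ(δ k) for every positive integer k and δ ∈ (0,1), hence ∫₀^∞ (1 − exp(c z^δ)) e^{−z}/z dz = −Σ_{k=1}^∞ (c^k/k!) Γ(δk) for c < 0, δ ∈ (0,1). -/
open MeasureTheory Real Set Filter

-- log-convexity bound: Γ(x+δ) ≤ x^δ Γ(x)
lemma gamma_shift_le {x δ : ℝ} (hx : 0 < x) (hδ0 : 0 < δ) (hδ1 : δ < 1) :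
    Real.Gamma (x + δ) ≤ x ^ δ * Real.Gamma x := by
  have h1 : (0:ℝ) ≤ 1 - δ := by linarith
  have hmem : x ∈ Ioi (0:ℝ) := hx
  have hmem' : x + 1 ∈ Ioi (0:ℝ) := by simp [Ioi]; linarith
  have hcx : (1 - δ) • x + δ • (x + 1) = x + δ := by simp [smul_eq_mul]; ring
  have := Real.convexOn_log_Gamma.2 hmem hmem' h1 hδ0.le (by ring)
  rw [hcx] at this
  simp only [Function.comp_apply, smul_eq_mul] at this
  have hGx : 0 < Real.Gamma x := Real.Gamma_pos_of_pos hx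
  have hGx1 : Real.Gamma (x + 1) = x * Real.Gamma x := Real.Gamma_add_one hx.ne'
  have hG : 0 < Real.Gamma (x + δ) := Real.Gamma_pos_of_pos (by linarith)
  have key : Real.log (Real.Gamma (x + δ)) ≤ Real.log (x ^ δ * Real.Gamma x) := by
    calc Real.log (Real.Gamma (x + δ))
        ≤ (1 - δ) * Real.log (Real.Gamma x) + δ * Real.log (Real.Gamma (x + 1)) := this
      _ = δ * Real.log x + Real.log (Real.Gamma x) := by
          rw [hGx1, Real.log_mul hx.ne' hGx.ne']; ring
      _ = Real.log (x ^ δ * Real.Gamma x) := by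
          rw [Real.log_mul (by positivity) hGx.ne', Real.log_rpow hx]
  exact (Real.log_le_log_iff hG (by positivity)).mp key

lemma summable_aux {c δ : ℝ} (hδ0 : 0 < δ) (hδ1 : δ < 1) :
    Summable (fun k : ℕ => |c| ^ (k + 1) / (Nat.factorial (k + 1)) *
      Real.Gamma (δ * (k + 1))) := by
  set a : ℕ → ℝ := fun k => |c| ^ (k + 1) / (Nat.factorial (k + 1)) *
      Real.Gamma (δ * (k + 1)) with ha
  apply summable_of_ratio_norm_eventually_le (r := 1/2) (by norm_num)
  have htend : Tendsto (fun k : ℕ => ((k:ℝ) + 2) ^ (1 - δ)) atTop atTop :=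
    (tendsto_rpow_atTop (by linarith)).comp
      (tendsto_atTop_add_const_right atTop 2 tendsto_natCast_atTop_atTop)
  filter_upwards [htend.eventually_ge_atTop (2 * |c|)] with k hk
  have hk2 : (0:ℝ) < (k:ℝ) + 2 := by positivity
  have hpos : (0:ℝ) < δ * ((k:ℝ) + 1) := by positivity
  have hGpos : 0 < Real.Gamma (δ * (k + 1)) := Real.Gamma_pos_of_pos hpos
  have hstep : Real.Gamma (δ * ((k:ℝ) + 2)) ≤ (δ * ((k:ℝ)+1)) ^ δ * Real.Gamma (δ * ((k:ℝ)+1)) := by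
    have : δ * ((k:ℝ) + 2) = δ * ((k:ℝ)+1) + δ := by ring
    rw [this]
    exact gamma_shift_le hpos hδ0 hδ1
  have hrpow : (δ * ((k:ℝ)+1)) ^ δ ≤ ((k:ℝ) + 2) ^ δ := by
    apply Real.rpow_le_rpow (by positivity) _ hδ0.le
    nlinarith
  have hnn : ∀ m : ℕ, 0 ≤ a m := fun m => by
    have := Real.Gamma_pos_of_pos (show 0 < δ * ((m:ℝ)+1) by positivity)
    simp only [ha]; positivity
  rw [Real.norm_eq_abs, Real.norm_eq_abs, abs_of_nonneg (hnn _), abs_of_nonneg (hnn _)]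
  have hfac : ((Nat.factorial (k + 2)) : ℝ) = ((k:ℝ) + 2) * (Nat.factorial (k+1)) := by
    push_cast [Nat.factorial_succ]; ring
  have key : ((k:ℝ) + 2) ^ δ * |c| ≤ ((k:ℝ) + 2) / 2 := by
    have h1 : 2 * |c| * ((k:ℝ)+2)^δ ≤ ((k:ℝ)+2)^(1-δ) * ((k:ℝ)+2)^δ := by
      apply mul_le_mul_of_nonneg_right hk (by positivity)
    have h2 : ((k:ℝ)+2)^(1-δ) * ((k:ℝ)+2)^δ = (k:ℝ)+2 := by
      rw [← Real.rpow_add hk2]; norm_num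
    nlinarith [Real.rpow_pos_of_pos hk2 δ]
  calc a (k+1) = |c| ^ (k + 2) / (Nat.factorial (k + 2)) * Real.Gamma (δ * ((k:ℝ) + 2)) := by
        simp only [ha]; push_cast; ring_nf
    _ ≤ |c| ^ (k + 2) / (Nat.factorial (k + 2)) * (((k:ℝ) + 2) ^ δ * Real.Gamma (δ * ((k:ℝ)+1))) := by
        apply mul_le_mul_of_nonneg_left (hstep.trans _) (by positivity)
        exact mul_le_mul_of_nonneg_right hrpow hGpos.le
    _ ≤ 1/2 * a k := by
        simp only [ha, hfac]
        rw [pow_succ]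
        have : |c| ^ (k+1) * |c| / (((k:ℝ) + 2) * (Nat.factorial (k+1))) *
            (((k:ℝ) + 2) ^ δ * Real.Gamma (δ * ((k:ℝ)+1)))
            = (((k:ℝ)+2)^δ * |c|) / ((k:ℝ)+2) *
              (|c| ^ (k+1) / (Nat.factorial (k+1)) * Real.Gamma (δ * ((k:ℝ)+1))) := by
          field_simp
        rw [this]
        apply mul_le_mul_of_nonneg_right _ (by positivity)
        rw [div_le_iff₀ hk2]
        calc ((k:ℝ)+2)^δ * |c| ≤ ((k:ℝ)+2)/2 := key
          _ = 1/2 * ((k:ℝ)+2) := by ring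

/-- **Closed form for the interference-free (half-duplex) rate integral.**
For `δ ∈ (0,1)` and every positive integer `k`,
`∫₀^∞ z^{δk−1} e^{−z} dz = Γ(δk)`, and hence for `c < 0`,
`∫₀^∞ (1 − exp(c z^δ)) e^{−z}/z dz = −Σ_{k=1}^∞ (c^k/k!) Γ(δk)`. -/
theorem rate_integral_closed_form (c δ : ℝ) (hc : c < 0)
    (hδ0 : 0 < δ) (hδ1 : δ < 1) :
    (∀ k : ℕ, 1 ≤ k →
      ∫ z in Ioi (0 : ℝ), z ^ (δ * k - 1) * Real.exp (-z) =
        Real.Gamma (δ * k)) ∧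
    ∫ z in Ioi (0 : ℝ), (1 - Real.exp (c * z ^ δ)) * Real.exp (-z) / z =
      -∑' k : ℕ, c ^ (k + 1) / (Nat.factorial (k + 1)) *
        Real.Gamma (δ * (k + 1)) := by
  have part1 : ∀ k : ℕ, 1 ≤ k →
      ∫ z in Ioi (0 : ℝ), z ^ (δ * k - 1) * Real.exp (-z) = Real.Gamma (δ * k) := by
    intro k hk
    have hs : 0 < δ * (k : ℝ) := by
      have : (1:ℝ) ≤ (k:ℝ) := by exact_mod_cast hk
      nlinarith
    rw [Real.Gamma_eq_integral hs]
    have h : ∀ z : ℝ, z ^ (δ * (k:ℝ) - 1) * Real.exp (-z)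
        = Real.exp (-z) * z ^ (δ * (k:ℝ) - 1) := fun z => mul_comm _ _
    simp_rw [h]
  refine ⟨part1, ?_⟩
  set f : ℕ → ℝ → ℝ := fun k z =>
    c ^ (k + 1) / (Nat.factorial (k + 1)) * (z ^ (δ * ((k:ℝ) + 1) - 1) * Real.exp (-z))
    with hf
  have hcast : ∀ k : ℕ, ((k + 1 : ℕ) : ℝ) = (k : ℝ) + 1 := fun k => by push_cast; ring
  have hsk : ∀ k : ℕ, (0:ℝ) < δ * ((k:ℝ) + 1) := fun k => by positivity
  have hint : ∀ k : ℕ, IntegrableOn (f k) (Ioi (0:ℝ)) := by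
    intro k
    refine ((Real.GammaIntegral_convergent (hsk k)).const_mul
      (c ^ (k + 1) / (Nat.factorial (k + 1)))).congr ?_
    exact Filter.Eventually.of_forall fun z => by simp only [hf]; ring
  have hmeas : ∀ k : ℕ, AEStronglyMeasurable (f k) (volume.restrict (Ioi (0:ℝ))) :=
    fun k => (hint k).1
  have hval : ∀ k : ℕ, ∫ z in Ioi (0:ℝ), f k z
      = c ^ (k + 1) / (Nat.factorial (k + 1)) * Real.Gamma (δ * ((k:ℝ) + 1)) := by
    intro k
    rw [hf]
    rw [MeasureTheory.integral_const_mul]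
    congr 1
    have := part1 (k + 1) (Nat.le_add_left 1 k)
    rwa [hcast k] at this
  -- norm integral value
  have hnorm : ∀ k : ℕ, ∫ z in Ioi (0:ℝ), ‖f k z‖
      = |c| ^ (k + 1) / (Nat.factorial (k + 1)) * Real.Gamma (δ * ((k:ℝ) + 1)) := by
    intro k
    have heq : EqOn (fun z : ℝ => ‖f k z‖)
        (fun z : ℝ => |c| ^ (k + 1) / (Nat.factorial (k + 1)) *
          (z ^ (δ * ((k:ℝ) + 1) - 1) * Real.exp (-z))) (Ioi 0) := by
      intro z hz
      have hz0 : (0:ℝ) < z := hz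
      have h1 : (0:ℝ) < z ^ (δ * ((k:ℝ) + 1) - 1) := Real.rpow_pos_of_pos hz0 _
      simp only [hf, Real.norm_eq_abs, abs_mul, abs_div, abs_pow]
      rw [abs_of_pos h1, abs_of_pos (Real.exp_pos _), Nat.abs_cast]
    rw [setIntegral_congr_fun measurableSet_Ioi heq, MeasureTheory.integral_const_mul]
    congr 1
    have := part1 (k + 1) (Nat.le_add_left 1 k)
    rwa [hcast k] at this
  have hfin : ∑' k : ℕ, ∫⁻ z, ‖f k z‖₊ ∂(volume.restrict (Ioi (0:ℝ))) ≠ ⊤ := by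
    have h1 : ∀ k : ℕ, ∫⁻ z, ‖f k z‖₊ ∂(volume.restrict (Ioi (0:ℝ)))
        = ENNReal.ofReal (|c| ^ (k + 1) / (Nat.factorial (k + 1)) *
          Real.Gamma (δ * ((k:ℝ) + 1))) := by
      intro k
      simp only [← enorm_eq_nnnorm]
      rw [← MeasureTheory.ofReal_integral_norm_eq_lintegral_enorm (hint k), hnorm k]
    rw [tsum_congr h1, ← ENNReal.ofReal_tsum_of_nonneg]
    · exact ENNReal.ofReal_ne_top
    · intro k
      have := Real.Gamma_pos_of_pos (hsk k)
      positivity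
    · exact summable_aux hδ0 hδ1
  have hpt : EqOn (fun z : ℝ => (1 - Real.exp (c * z ^ δ)) * Real.exp (-z) / z)
      (fun z : ℝ => -(∑' k : ℕ, f k z)) (Ioi 0) := by
    intro z hz
    have hz0 : (0:ℝ) < z := hz
    have hterm : ∀ k : ℕ, f k z
        = (c * z ^ δ) ^ (k + 1) / (Nat.factorial (k + 1)) * (Real.exp (-z) / z) := by
      intro k
      have h1 : z ^ (δ * ((k:ℝ) + 1) - 1) = z ^ (δ * ((k:ℝ) + 1)) / z := by
        rw [Real.rpow_sub hz0, Real.rpow_one]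
      have h2 : (z ^ δ) ^ (k + 1) = z ^ (δ * ((k:ℝ) + 1)) := by
        rw [← Real.rpow_natCast (z ^ δ) (k + 1), ← Real.rpow_mul hz0.le, hcast k]
      rw [hf]
      simp only
      rw [mul_pow, h2, h1]
      ring
    have hsum := Real.summable_pow_div_factorial (c * z ^ δ)
    have hexp : ∑' n : ℕ, (c * z ^ δ) ^ n / (Nat.factorial n) = Real.exp (c * z ^ δ) := by
      rw [Real.exp_eq_exp_ℝ, NormedSpace.exp_eq_tsum_div]
    have hshift : ∑' k : ℕ, (c * z ^ δ) ^ (k + 1) / ((Nat.factorial (k + 1)) : ℝ)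
        = Real.exp (c * z ^ δ) - 1 := by
      have h0 := Summable.tsum_eq_zero_add hsum
      rw [hexp] at h0
      simp only [pow_zero, Nat.factorial_zero, Nat.cast_one] at h0
      linarith
    simp only
    rw [tsum_congr hterm, tsum_mul_right, hshift]
    field_simp
    ring
  calc ∫ z in Ioi (0:ℝ), (1 - Real.exp (c * z ^ δ)) * Real.exp (-z) / z
      = ∫ z in Ioi (0:ℝ), -(∑' k : ℕ, f k z) := setIntegral_congr_fun measurableSet_Ioi hpt
    _ = -∫ z in Ioi (0:ℝ), ∑' k : ℕ, f k z := MeasureTheory.integral_neg _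
    _ = -∑' k : ℕ, ∫ z in Ioi (0:ℝ), f k z := by rw [MeasureTheory.integral_tsum hmeas hfin]
    _ = -∑' k : ℕ, c ^ (k + 1) / (Nat.factorial (k + 1)) * Real.Gamma (δ * ((k:ℝ) + 1)) := by
        rw [tsum_congr hval]
end
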